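/- arXiv:2507.17796 — 2 statements merged into one kernel-verified Lean document; each statement's English description precedes it below -/
import Mathlib

section
/- Split conformal prediction validity: let s₁,…,s_n, s be exchangeable real-valued random variables (nonconformity scores of calibration data and a test point). Define b = the ⌈(1−α)(n+1)⌉-th smallest value among s₁,…,s_n (with b = +∞ if ⌈(1−α)(n+1)⌉ > n). Then P(s ≤ b) ≥ 1 − α. -/
/-!
Call the strict rank of coordinate `j` the number of coordinates strictly below it. In every
realisation at least `k` of the `n + 1` scores have strict rank below `k` (for `k ≤ n + 1`), and
by exchangeability each score does so with the same probability, so that probability is at least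
`k / (n + 1) ≥ 1 - α` for `k = ⌈(1 - α)(n + 1)⌉`. For the test score, having strict rank below
`k` is exactly the event that it is at most the `k`-th smallest calibration score.
-/

open MeasureTheory

/-- The `k`-th smallest value (1-indexed) among `w 0, …, w (n-1)`. -/
noncomputable def kthSmallest {n : ℕ} (w : Fin n → ℝ) (k : ℕ) : ℝ :=
  ((List.ofFn w).mergeSort (· ≤ ·)).getD (k - 1) 0

open Finset
open scoped ENNReal

section StrictRank

variable {ι α : Type*} [Fintype ι] [LinearOrder α]

def strictRank (x : ι → α) (j : ι) : ℕ := #{i | x i < x j}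

lemma card_filter_comp_perm (σ : Equiv.Perm ι) (p : ι → Prop) [DecidablePred p] :
    #{i | p (σ i)} = #{i | p i} := by
  simp only [card_filter]
  exact Equiv.sum_comp σ fun i => if p i then 1 else 0

lemma strictRank_comp_perm (x : ι → α) (σ : Equiv.Perm ι) (j : ι) :
    strictRank (x ∘ σ) j = strictRank x (σ j) :=
  card_filter_comp_perm σ fun i => x i < x (σ j)

lemma le_card_strictRank_lt (x : ι → α) {k : ℕ} (hk : k ≤ Fintype.card ι) :
    k ≤ #{j | strictRank x j < k} := by
  classical
  set T : Finset ι := {j | strictRank x j < k}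
  rcases Tᶜ.eq_empty_or_nonempty with hT | hT
  · rwa [(compl_eq_empty_iff _).1 hT, card_univ]
  -- a coordinate of least value outside `T` has all strictly smaller coordinates inside `T`
  obtain ⟨j, hjT, hmin⟩ := Tᶜ.exists_min_image x hT
  have hbelow : ({i | x i < x j} : Finset ι) ⊆ T := fun i hi => by
    by_contra hiT
    exact (hmin i (mem_compl.2 hiT)).not_gt (mem_filter.1 hi).2
  calc k ≤ strictRank x j := by simpa [T] using hjT
    _ ≤ #T := card_le_card hbelow

lemma strictRank_last {n : ℕ} (x : Fin (n + 1) → α) :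
    strictRank x (Fin.last n) = #{i : Fin n | x i.castSucc < x (Fin.last n)} := by
  simp only [strictRank, card_filter, Fin.sum_univ_castSucc, lt_irrefl, if_false, add_zero]

lemma measurableSet_strictRank_lt (j : ι) (k : ℕ) :
    MeasurableSet {x : ι → ℝ | strictRank x j < k} := by
  have hrank : Measurable fun x : ι → ℝ => strictRank x j := by
    simp only [strictRank, card_filter]
    exact Finset.measurable_sum _ fun i _ => Measurable.ite
      (measurableSet_lt (measurable_pi_apply i) (measurable_pi_apply j))
      measurable_const measurable_const
  exact hrank (measurableSet_Iio (a := k))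

end StrictRank

section KthSmallest

variable {m : ℕ}

lemma mergeSort_ofFn {α : Type*} [LinearOrder α] (w : Fin m → α) :
    (List.ofFn w).mergeSort (· ≤ ·) = List.ofFn (w ∘ Tuple.sort w) :=
  List.Perm.eq_of_sortedLE List.sortedLE_mergeSort (Tuple.monotone_sort w).sortedLE_ofFn
    ((List.mergeSort_perm _ _).trans ((Tuple.sort w).ofFn_comp_perm w).symm)

lemma kthSmallest_succ (w : Fin m → ℝ) (j : Fin m) :
    kthSmallest w (j + 1) = w (Tuple.sort w j) := by
  rw [kthSmallest, mergeSort_ofFn, Nat.add_sub_cancel, List.getD_eq_getElem _ _ (by simp)]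
  simp

lemma le_kthSmallest_iff (w : Fin m → ℝ) {k : ℕ} (hk₁ : 1 ≤ k) (hk : k ≤ m) (s : ℝ) :
    s ≤ kthSmallest w k ↔ #{i | w i < s} < k := by
  obtain ⟨j, rfl⟩ : ∃ j : Fin m, k = j + 1 := ⟨⟨k - 1, by omega⟩, by simp; omega⟩
  rw [kthSmallest_succ, Nat.lt_succ_iff, ← card_filter_comp_perm (Tuple.sort w), ← not_lt,
    ← not_lt]
  exact (Tuple.lt_card_lt_iff_apply_lt_of_monotone (Tuple.monotone_sort w)).not.symm

lemma le_kthSmallest_castSucc_iff {n k : ℕ} (x : Fin (n + 1) → ℝ) (hk₁ : 1 ≤ k) (hk : k ≤ n) :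
    x (Fin.last n) ≤ kthSmallest (fun i : Fin n => x i.castSucc) k ↔
      strictRank x (Fin.last n) < k := by
  rw [le_kthSmallest_iff _ hk₁ hk, strictRank_last]

end KthSmallest

section Exchangeable

variable {Ω : Type*} [MeasurableSpace Ω] {μ : Measure Ω}

lemma measure_comp_perm_preimage {ι β : Type*} [MeasurableSpace β] {S : Ω → ι → β}
    (hS : Measurable S) {σ : Equiv.Perm ι}
    (hσ : Measure.map (fun ω i => S ω (σ i)) μ = Measure.map S μ)
    {A : Set (ι → β)} (hA : MeasurableSet A) :
    μ ((fun ω i => S ω (σ i)) ⁻¹' A) = μ (S ⁻¹' A) := by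
  have hSσ : Measurable fun ω i => S ω (σ i) :=
    measurable_pi_lambda _ fun i => (measurable_pi_apply (σ i)).comp hS
  rw [← Measure.map_apply hSσ hA, hσ, Measure.map_apply hS hA]

lemma measure_strictRank_lt_eq {ι : Type*} [Fintype ι] [DecidableEq ι] {S : Ω → ι → ℝ}
    (hS : Measurable S)
    (hexch : ∀ σ : Equiv.Perm ι, Measure.map (fun ω i => S ω (σ i)) μ = Measure.map S μ)
    (k : ℕ) (i j : ι) :
    μ {ω | strictRank (S ω) i < k} = μ {ω | strictRank (S ω) j < k} := by
  calc μ {ω | strictRank (S ω) i < k}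
      = μ {ω | strictRank (S ω ∘ Equiv.swap j i) j < k} := by
        simp only [strictRank_comp_perm, Equiv.swap_apply_left]
    _ = μ {ω | strictRank (S ω) j < k} :=
        measure_comp_perm_preimage hS (hexch _) (measurableSet_strictRank_lt j k)

lemma mul_measure_univ_le_sum_measure {ι : Type*} [Fintype ι] {A : ι → Set Ω}
    [∀ ω, DecidablePred (ω ∈ A ·)] (hA : ∀ j, MeasurableSet (A j)) {k : ℕ} (hk : ∀ ω, k ≤ #{j | ω ∈ A j}) :
    k * μ Set.univ ≤ ∑ j, μ (A j) :=
  calc k * μ Set.univ = ∫⁻ _, (k : ℝ≥0∞) ∂μ := (lintegral_const _).symm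
    _ ≤ ∫⁻ ω, ∑ j, (A j).indicator 1 ω ∂μ := lintegral_mono fun ω => by
        simpa [Set.indicator_apply] using hk ω
    _ = ∑ j, μ (A j) := by
        rw [lintegral_finsetSum _ fun j _ => measurable_one.indicator (hA j)]
        simp only [lintegral_indicator_one (hA _)]

end Exchangeable

/-- Split conformal prediction validity: if the scores `S 0, …, S (n-1), S n` are
exchangeable, and `b` is the `⌈(1−α)(n+1)⌉`-th smallest of the first `n` scores
(`b = +∞`, i.e. no constraint, if `⌈(1−α)(n+1)⌉ > n`), then the test score
`S n` satisfies `P(S n ≤ b) ≥ 1 − α`. -/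
theorem split_conformal_validity
    {Ω : Type*} [MeasurableSpace Ω] (μ : Measure Ω) [IsProbabilityMeasure μ]
    (n : ℕ) (S : Ω → Fin (n + 1) → ℝ) (hS : Measurable S)
    (hexch : ∀ σ : Equiv.Perm (Fin (n + 1)),
      Measure.map (fun ω i => S ω (σ i)) μ = Measure.map S μ)
    (α : ℝ) (hα : α ∈ Set.Ioo (0 : ℝ) 1) :
    ENNReal.ofReal (1 - α) ≤
      μ {ω | ⌈(1 - α) * (n + 1)⌉₊ ≤ n →
        S ω (Fin.last n) ≤
          kthSmallest (fun i : Fin n => S ω i.castSucc) ⌈(1 - α) * (n + 1)⌉₊} := by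
  set k := ⌈(1 - α) * (n + 1)⌉₊
  obtain ⟨hα₀, hα₁⟩ := hα
  by_cases hkn : k ≤ n
  swap
  · calc ENNReal.ofReal (1 - α) ≤ 1 := ENNReal.ofReal_le_one.2 (by linarith)
      _ = μ _ := by simp [hkn]
  have hk₁ : 1 ≤ k := Nat.one_le_ceil_iff.2 (by nlinarith)
  have hevent : {ω | k ≤ n → S ω (Fin.last n) ≤ kthSmallest (fun i : Fin n => S ω i.castSucc) k}
      = {ω | strictRank (S ω) (Fin.last n) < k} := by
    ext ω
    simp [hkn, le_kthSmallest_castSucc_iff _ hk₁ hkn]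
  have hcount : (k : ℝ≥0∞) ≤ (n + 1 : ℕ) * μ {ω | strictRank (S ω) (Fin.last n) < k} :=
    calc (k : ℝ≥0∞) = k * μ Set.univ := by simp
      _ ≤ ∑ j, μ {ω | strictRank (S ω) j < k} :=
        mul_measure_univ_le_sum_measure (A := fun j => {ω | strictRank (S ω) j < k})
          (fun j => hS (measurableSet_strictRank_lt j k))
          fun ω => le_card_strictRank_lt (S ω) (by simp; omega)
      _ = _ := by simp [measure_strictRank_lt_eq hS hexch k _ (Fin.last n)]
  rw [hevent, ← ENNReal.mul_le_mul_iff_right (a := (n + 1 : ℕ)) (by simp) (by simp)]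
  refine le_trans ?_ hcount
  rw [← ENNReal.ofReal_natCast, ← ENNReal.ofReal_mul (by positivity), ← ENNReal.ofReal_natCast k]
  exact ENNReal.ofReal_le_ofReal (by push_cast; linarith [Nat.le_ceil ((1 - α) * (n + 1))])
end

section
/- Bivariate Sklar construction: if F₁, F₂ are continuous CDFs on ℝ and C is a 2-copula, then H(x₁,x₂) = C(F₁(x₁), F₂(x₂)) is a bivariate CDF (2-increasing, right-continuous, with the correct limits) whose marginals are F₁ and F₂. -/
open Filter Topology

/-- Bivariate Sklar construction: if `F₁, F₂` are continuous CDFs on `ℝ` and `C` is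
a 2-copula (grounded, uniform margins, 2-increasing), then
`H(x₁, x₂) = C (F₁ x₁) (F₂ x₂)` is a bivariate CDF: it is 2-increasing,
right-continuous, tends to `0` when either coordinate tends to `−∞`, and its
marginals (the limits as the other coordinate tends to `+∞`) are `F₁` and `F₂`. -/
theorem bivariate_sklar_construction
    (F₁ F₂ : ℝ → ℝ)
    (hF₁mono : Monotone F₁) (hF₁cont : Continuous F₁)
    (hF₁bot : Tendsto F₁ atBot (nhds 0)) (hF₁top : Tendsto F₁ atTop (nhds 1))
    (hF₂mono : Monotone F₂) (hF₂cont : Continuous F₂)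
    (hF₂bot : Tendsto F₂ atBot (nhds 0)) (hF₂top : Tendsto F₂ atTop (nhds 1))
    (C : ℝ → ℝ → ℝ)
    (hCground : ∀ u ∈ Set.Icc (0 : ℝ) 1, C u 0 = 0 ∧ C 0 u = 0)
    (hCmargin : ∀ u ∈ Set.Icc (0 : ℝ) 1, C u 1 = u ∧ C 1 u = u)
    (hCincr : ∀ a₁ b₁ a₂ b₂ : ℝ, a₁ ∈ Set.Icc (0 : ℝ) 1 → b₁ ∈ Set.Icc (0 : ℝ) 1 →
      a₂ ∈ Set.Icc (0 : ℝ) 1 → b₂ ∈ Set.Icc (0 : ℝ) 1 → a₁ ≤ b₁ → a₂ ≤ b₂ →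
      0 ≤ C b₁ b₂ - C a₁ b₂ - C b₁ a₂ + C a₁ a₂)
    (H : ℝ → ℝ → ℝ) (hH : ∀ x₁ x₂, H x₁ x₂ = C (F₁ x₁) (F₂ x₂)) :
    (∀ a₁ b₁ a₂ b₂ : ℝ, a₁ ≤ b₁ → a₂ ≤ b₂ →
      0 ≤ H b₁ b₂ - H a₁ b₂ - H b₁ a₂ + H a₁ a₂) ∧
    (∀ x₁ x₂ : ℝ, ContinuousWithinAt (fun y => H x₁ y) (Set.Ici x₂) x₂ ∧
      ContinuousWithinAt (fun y => H y x₂) (Set.Ici x₁) x₁) ∧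
    (∀ x₁ : ℝ, Tendsto (fun x₂ => H x₁ x₂) atBot (nhds 0)) ∧
    (∀ x₂ : ℝ, Tendsto (fun x₁ => H x₁ x₂) atBot (nhds 0)) ∧
    (∀ x₁ : ℝ, Tendsto (fun x₂ => H x₁ x₂) atTop (nhds (F₁ x₁))) ∧
    (∀ x₂ : ℝ, Tendsto (fun x₁ => H x₁ x₂) atTop (nhds (F₂ x₂))) := by
  have h01 : (0:ℝ) ∈ Set.Icc (0:ℝ) 1 := ⟨le_refl 0, zero_le_one⟩
  have h11 : (1:ℝ) ∈ Set.Icc (0:ℝ) 1 := ⟨zero_le_one, le_refl 1⟩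
  have h1mem : ∀ x, F₁ x ∈ Set.Icc (0:ℝ) 1 := fun x =>
    ⟨le_of_tendsto hF₁bot (eventually_atBot.mpr ⟨x, fun y hy => hF₁mono hy⟩),
     ge_of_tendsto hF₁top (eventually_atTop.mpr ⟨x, fun y hy => hF₁mono hy⟩)⟩
  have h2mem : ∀ x, F₂ x ∈ Set.Icc (0:ℝ) 1 := fun x =>
    ⟨le_of_tendsto hF₂bot (eventually_atBot.mpr ⟨x, fun y hy => hF₂mono hy⟩),
     ge_of_tendsto hF₂top (eventually_atTop.mpr ⟨x, fun y hy => hF₂mono hy⟩)⟩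
  -- Lipschitz-type estimates in the second variable
  have key₂ : ∀ a ∈ Set.Icc (0:ℝ) 1, ∀ v ∈ Set.Icc (0:ℝ) 1, ∀ w ∈ Set.Icc (0:ℝ) 1,
      v ≤ w → C a v ≤ C a w ∧ C a w - C a v ≤ w - v := by
    intro a ha v hv w hw hvw
    constructor
    · have h := hCincr 0 a v w h01 ha hv hw ha.1 hvw
      rw [(hCground w hw).2, (hCground v hv).2] at h
      linarith
    · have h := hCincr a 1 v w ha h11 hv hw ha.2 hvw
      rw [(hCmargin w hw).2, (hCmargin v hv).2] at h
      linarith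
  -- Lipschitz-type estimates in the first variable
  have key₁ : ∀ a ∈ Set.Icc (0:ℝ) 1, ∀ v ∈ Set.Icc (0:ℝ) 1, ∀ w ∈ Set.Icc (0:ℝ) 1,
      v ≤ w → C v a ≤ C w a ∧ C w a - C v a ≤ w - v := by
    intro a ha v hv w hw hvw
    constructor
    · have h := hCincr v w 0 a hv hw h01 ha hvw ha.1
      rw [(hCground w hw).1, (hCground v hv).1] at h
      linarith
    · have h := hCincr v w a 1 hv hw ha h11 hvw ha.2
      rw [(hCmargin w hw).1, (hCmargin v hv).1] at h
      linarith
  -- C is 1-Lipschitz on [0,1] in each variable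
  have lip₂ : ∀ a ∈ Set.Icc (0:ℝ) 1, LipschitzOnWith 1 (C a) (Set.Icc (0:ℝ) 1) := by
    intro a ha
    apply LipschitzOnWith.of_dist_le_mul
    intro v hv w hw
    rw [Real.dist_eq, Real.dist_eq, NNReal.coe_one, one_mul]
    rcases le_total v w with h | h
    · have := key₂ a ha v hv w hw h
      rw [abs_of_nonpos (by linarith [this.1]), abs_of_nonpos (by linarith)]; linarith [this.2]
    · have := key₂ a ha w hw v hv h
      rw [abs_of_nonneg (by linarith [this.1]), abs_of_nonneg (by linarith)]; linarith [this.2]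
  have lip₁ : ∀ a ∈ Set.Icc (0:ℝ) 1, LipschitzOnWith 1 (fun u => C u a) (Set.Icc (0:ℝ) 1) := by
    intro a ha
    apply LipschitzOnWith.of_dist_le_mul
    intro v hv w hw
    rw [Real.dist_eq, Real.dist_eq, NNReal.coe_one, one_mul]
    rcases le_total v w with h | h
    · have := key₁ a ha v hv w hw h
      rw [abs_of_nonpos (by linarith [this.1]), abs_of_nonpos (by linarith)]; linarith [this.2]
    · have := key₁ a ha w hw v hv h
      rw [abs_of_nonneg (by linarith [this.1]), abs_of_nonneg (by linarith)]; linarith [this.2]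
  refine ⟨?_, ?_, ?_, ?_, ?_, ?_⟩
  · intro a₁ b₁ a₂ b₂ h1 h2
    simp only [hH]
    exact hCincr (F₁ a₁) (F₁ b₁) (F₂ a₂) (F₂ b₂) (h1mem a₁) (h1mem b₁) (h2mem a₂) (h2mem b₂)
      (hF₁mono h1) (hF₂mono h2)
  · intro x₁ x₂
    constructor
    · simp only [hH]
      have : Continuous (fun y => C (F₁ x₁) (F₂ y)) :=
        ((lip₂ (F₁ x₁) (h1mem x₁)).continuousOn).comp_continuous hF₂cont h2mem
      exact this.continuousWithinAt
    · simp only [hH]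
      have : Continuous (fun y => C (F₁ y) (F₂ x₂)) :=
        ((lip₁ (F₂ x₂) (h2mem x₂)).continuousOn).comp_continuous hF₁cont h1mem
      exact this.continuousWithinAt
  · intro x₁
    simp only [hH]
    apply tendsto_of_tendsto_of_tendsto_of_le_of_le tendsto_const_nhds hF₂bot
    · intro x₂
      dsimp only
      have := key₂ (F₁ x₁) (h1mem x₁) 0 h01 (F₂ x₂) (h2mem x₂) (h2mem x₂).1
      rw [(hCground (F₁ x₁) (h1mem x₁)).1] at this
      linarith [this.1]
    · intro x₂
      dsimp only
      have := key₂ (F₁ x₁) (h1mem x₁) 0 h01 (F₂ x₂) (h2mem x₂) (h2mem x₂).1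
      rw [(hCground (F₁ x₁) (h1mem x₁)).1] at this
      linarith [this.2]
  · intro x₂
    simp only [hH]
    apply tendsto_of_tendsto_of_tendsto_of_le_of_le tendsto_const_nhds hF₁bot
    · intro x₁
      dsimp only
      have := key₁ (F₂ x₂) (h2mem x₂) 0 h01 (F₁ x₁) (h1mem x₁) (h1mem x₁).1
      rw [(hCground (F₂ x₂) (h2mem x₂)).2] at this
      linarith [this.1]
    · intro x₁
      dsimp only
      have := key₁ (F₂ x₂) (h2mem x₂) 0 h01 (F₁ x₁) (h1mem x₁) (h1mem x₁).1
      rw [(hCground (F₂ x₂) (h2mem x₂)).2] at this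
      linarith [this.2]
  · intro x₁
    simp only [hH]
    have hlow : Tendsto (fun x₂ => F₁ x₁ - 1 + F₂ x₂) atTop (nhds (F₁ x₁)) := by
      have := (tendsto_const_nhds (x := F₁ x₁ - 1) (f := atTop (α := ℝ))).add hF₂top
      simpa using this
    apply tendsto_of_tendsto_of_tendsto_of_le_of_le hlow tendsto_const_nhds
    · intro x₂
      dsimp only
      have := key₂ (F₁ x₁) (h1mem x₁) (F₂ x₂) (h2mem x₂) 1 h11 (h2mem x₂).2
      rw [(hCmargin (F₁ x₁) (h1mem x₁)).1] at this
      linarith [this.2]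
    · intro x₂
      dsimp only
      have := key₂ (F₁ x₁) (h1mem x₁) (F₂ x₂) (h2mem x₂) 1 h11 (h2mem x₂).2
      rw [(hCmargin (F₁ x₁) (h1mem x₁)).1] at this
      linarith [this.1]
  · intro x₂
    simp only [hH]
    have hlow : Tendsto (fun x₁ => F₂ x₂ - 1 + F₁ x₁) atTop (nhds (F₂ x₂)) := by
      have := (tendsto_const_nhds (x := F₂ x₂ - 1) (f := atTop (α := ℝ))).add hF₁top
      simpa using this
    apply tendsto_of_tendsto_of_tendsto_of_le_of_le hlow tendsto_const_nhds
    · intro x₁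
      dsimp only
      have := key₁ (F₂ x₂) (h2mem x₂) (F₁ x₁) (h1mem x₁) 1 h11 (h1mem x₁).2
      rw [(hCmargin (F₂ x₂) (h2mem x₂)).2] at this
      linarith [this.2]
    · intro x₁
      dsimp only
      have := key₁ (F₂ x₂) (h2mem x₂) (F₁ x₁) (h1mem x₁) 1 h11 (h1mem x₁).2
      rw [(hCmargin (F₂ x₂) (h2mem x₂)).2] at this
      linarith [this.1]
end
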